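/- arXiv:1612.07877 — 3 statements merged into one kernel-verified Lean document; each statement's English description precedes it below -/
import Mathlib

section
/- A pair (j₁, j₂) of elements of the polynomial algebra in q,p is commutator-conservative, i.e. there exists J with j₁ = (1/i)[q,J] and j₂ = (1/i)[p,J], if and only if the curl condition -∂j₁/∂q = ∂j₂/∂p holds, where ∂X/∂q := (-1/i)[p,X] and ∂X/∂p := (1/i)[q,X]. -/
/-- The defining relation of the Weyl algebra: `q p - p q = i • 1`,
with `q = ι 0` and `p = ι 1`. -/
inductive WeylRel : FreeAlgebra ℂ (Fin 2) → FreeAlgebra ℂ (Fin 2) → Prop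
  | ccr : WeylRel
      (FreeAlgebra.ι ℂ (0 : Fin 2) * FreeAlgebra.ι ℂ (1 : Fin 2)
        - FreeAlgebra.ι ℂ (1 : Fin 2) * FreeAlgebra.ι ℂ (0 : Fin 2))
      (Complex.I • 1)

/-- The Weyl algebra over ℂ generated by `q`, `p` with `[q,p] = i • 1`. -/
abbrev Weyl : Type := RingQuot WeylRel

noncomputable def Weyl.q : Weyl := RingQuot.mkAlgHom ℂ WeylRel (FreeAlgebra.ι ℂ 0)
noncomputable def Weyl.p : Weyl := RingQuot.mkAlgHom ℂ WeylRel (FreeAlgebra.ι ℂ 1)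

/-!
Normal ordering identifies the Weyl algebra with `ℂ[x₀, x₁]` as a vector space: the monomials
`q^a p^b` span by the commutation relation, and they are linearly independent because under the
action `q ↦ x₀`, `p ↦ x₁ - i ∂₀` on `ℂ[x₀, x₁]` they send `1` to `x₀^a x₁^b`. Since
`[p, q^a] = -a i q^(a-1)` and `[q, p^b] = b i p^(b-1)`, this symbol map turns `i[p, ·]` into
`∂₀` and `-i[q, ·]` into `∂₁`. The theorem is thereby reduced to the Poincaré lemma for
polynomial vector fields in two variables, which follows from the antiderivative
`x^m ↦ x^(m + eᵢ) / (mᵢ + 1)`.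
-/

open MvPolynomial

namespace MvPolynomial

variable {σ R K : Type*}

theorem pderiv_pderiv_comm [CommRing R] (i j : σ) (f : MvPolynomial σ R) :
    pderiv i (pderiv j f) = pderiv j (pderiv i f) := by
  classical
  have h : ⁅pderiv i, pderiv j⁆ = (0 : Derivation R (MvPolynomial σ R) (MvPolynomial σ R)) :=
    derivation_ext fun k => by
      rw [Derivation.commutator_apply]
      simp [pderiv_X, Pi.single_apply, apply_ite]
  rw [← sub_eq_zero, ← Derivation.commutator_apply, h, Derivation.zero_apply]

variable [Field K]

noncomputable def antideriv (i : σ) : MvPolynomial σ K →ₗ[K] MvPolynomial σ K :=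
  (basisMonomials σ K).constr K fun m => monomial (m + Finsupp.single i 1) (m i + 1 : K)⁻¹

theorem antideriv_monomial (i : σ) (m : σ →₀ ℕ) (c : K) :
    antideriv i (monomial m c) = monomial (m + Finsupp.single i 1) (c / (m i + 1)) := by
  have : monomial m c = c • basisMonomials σ K m := by
    rw [coe_basisMonomials, smul_monomial, smul_eq_mul, mul_one]
  rw [this, map_smul, antideriv, Module.Basis.constr_basis, smul_monomial, smul_eq_mul,
    div_eq_mul_inv]

theorem pderiv_antideriv_self [CharZero K] (i : σ) (f : MvPolynomial σ K) :
    pderiv i (antideriv i f) = f := by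
  classical
  induction f using MvPolynomial.induction_on' with
  | monomial m c =>
    rw [antideriv_monomial, pderiv_monomial, add_tsub_cancel_right]
    congr 1
    simp only [Finsupp.coe_add, Pi.add_apply, Finsupp.single_eq_same, Nat.cast_add, Nat.cast_one]
    field_simp
  | add f g hf hg => simp [hf, hg]

theorem pderiv_antideriv_of_ne {i j : σ} (hij : i ≠ j) (f : MvPolynomial σ K) :
    pderiv j (antideriv i f) = antideriv i (pderiv j f) := by
  classical
  induction f using MvPolynomial.induction_on' with
  | monomial m c =>
    have hexp : m + Finsupp.single i 1 - Finsupp.single j 1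
        = m - Finsupp.single j 1 + Finsupp.single i 1 := by
      ext k
      simp only [Finsupp.coe_add, Finsupp.coe_tsub, Pi.add_apply, Pi.sub_apply,
        Finsupp.single_apply]
      split_ifs <;> subst_vars <;> first | omega | exact absurd rfl hij
    rw [antideriv_monomial, pderiv_monomial, pderiv_monomial, antideriv_monomial, hexp]
    simp only [Finsupp.coe_add, Pi.add_apply, Finsupp.single_eq_of_ne hij.symm, add_zero,
      Finsupp.coe_tsub, Pi.sub_apply, Finsupp.single_eq_of_ne hij, tsub_zero]
    rw [div_mul_eq_mul_div]
  | add f g hf hg => simp [hf, hg]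

theorem exists_eq_pderiv_and_eq_pderiv_iff [CharZero K] {i j : σ} (hij : i ≠ j)
    {a b : MvPolynomial σ K} :
    (∃ f, a = pderiv i f ∧ b = pderiv j f) ↔ pderiv j a = pderiv i b := by
  constructor
  · rintro ⟨f, rfl, rfl⟩
    exact pderiv_pderiv_comm j i f
  · intro h
    set r := b - pderiv j (antideriv i a)
    have hr : pderiv i r = 0 := by
      rw [map_sub, pderiv_pderiv_comm, pderiv_antideriv_self, h, sub_self]
    refine ⟨antideriv i a + antideriv j r, ?_, ?_⟩
    · rw [map_add, pderiv_antideriv_self, pderiv_antideriv_of_ne hij.symm, hr, map_zero, add_zero]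
    · rw [map_add, pderiv_antideriv_self, add_sub_cancel]

end MvPolynomial

theorem mul_pow_sub_pow_mul_of_mul_sub_mul {R A : Type*} [CommRing R] [Ring A] [Algebra R A]
    {x y : A} {c : R} (h : x * y - y * x = c • 1) (n : ℕ) :
    x * y ^ n - y ^ n * x = (n * c) • y ^ (n - 1) := by
  induction n with
  | zero => simp
  | succ n ih =>
    have step : x * y ^ (n + 1) - y ^ (n + 1) * x = (x * y ^ n - y ^ n * x) * y + c • y ^ n := by
      rw [← mul_one (y ^ n), ← mul_smul_comm, ← h, mul_one]
      noncomm_ring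
    rw [step, ih, smul_mul_assoc]
    rcases n with _ | n
    · simp
    · rw [Nat.add_sub_cancel, ← pow_succ, Nat.add_sub_cancel, ← add_smul]
      push_cast
      ring_nf

namespace Weyl

theorem q_mul_p_sub_p_mul_q : q * p - p * q = Complex.I • 1 := by
  have h := RingQuot.mkAlgHom_rel ℂ WeylRel.ccr
  rwa [map_sub, map_mul, map_mul, map_smul, map_one] at h

theorem p_mul_q_pow_sub_q_pow_mul_p (n : ℕ) :
    p * q ^ n - q ^ n * p = (n * -Complex.I) • q ^ (n - 1) :=
  -- `RingQuot` has its own `SMul` instance, which `rw [neg_smul]` does not see through.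
  mul_pow_sub_pow_mul_of_mul_sub_mul
    (by rw [← neg_sub, q_mul_p_sub_p_mul_q]; exact (neg_smul Complex.I (1 : Weyl)).symm) n

theorem q_mul_p_pow_sub_p_pow_mul_q (n : ℕ) :
    q * p ^ n - p ^ n * q = (n * Complex.I) • p ^ (n - 1) :=
  mul_pow_sub_pow_mul_of_mul_sub_mul q_mul_p_sub_p_mul_q n

@[elab_as_elim]
theorem induction_on {motive : Weyl → Prop} (W : Weyl)
    (scalar : ∀ c : ℂ, motive (algebraMap ℂ Weyl c))
    (hq : motive q) (hp : motive p)
    (add : ∀ a b, motive a → motive b → motive (a + b))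
    (mul : ∀ a b, motive a → motive b → motive (a * b)) : motive W := by
  obtain ⟨x, rfl⟩ := RingQuot.mkAlgHom_surjective ℂ WeylRel W
  induction x using FreeAlgebra.induction with
  | grade0 c => rw [AlgHom.commutes]; exact scalar c
  | grade1 i => fin_cases i; exacts [hq, hp]
  | add a b ha hb => rw [map_add]; exact add _ _ ha hb
  | mul a b ha hb => rw [map_mul]; exact mul _ _ ha hb

noncomputable def normalMonomial (m : Fin 2 →₀ ℕ) : Weyl := q ^ m 0 * p ^ m 1

theorem q_pow_mul_p_pow_mem_span (a b : ℕ) :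
    q ^ a * p ^ b ∈ Submodule.span ℂ (Set.range normalMonomial) :=
  Submodule.subset_span ⟨Finsupp.single 0 a + Finsupp.single 1 b, by simp [normalMonomial]⟩

theorem span_normalMonomial : Submodule.span ℂ (Set.range normalMonomial) = ⊤ := by
  set S := Submodule.span ℂ (Set.range normalMonomial)
  suffices h : ∀ W, ∀ s ∈ S, W * s ∈ S from
    Submodule.eq_top_iff'.2 fun W => by
      simpa using h W 1 (by simpa using q_pow_mul_p_pow_mem_span 0 0)
  intro W
  induction W using induction_on with
  | scalar c => intro s hs; simpa [Algebra.algebraMap_eq_smul_one] using S.smul_mem c hs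
  | hq =>
    refine fun s hs => Submodule.span_le (p := S.comap (LinearMap.mulLeft ℂ q)) |>.2 ?_ hs
    rintro _ ⟨m, rfl⟩
    simpa [normalMonomial, ← mul_assoc, ← pow_succ'] using
      q_pow_mul_p_pow_mem_span (m 0 + 1) (m 1)
  | hp =>
    refine fun s hs => Submodule.span_le (p := S.comap (LinearMap.mulLeft ℂ p)) |>.2 ?_ hs
    rintro _ ⟨m, rfl⟩
    have h : p * normalMonomial m
        = q ^ m 0 * p ^ (m 1 + 1) + (m 0 * -Complex.I) • (q ^ (m 0 - 1) * p ^ m 1) := by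
      rw [normalMonomial, ← mul_assoc, ← sub_add_cancel (p * q ^ m 0) (q ^ m 0 * p),
        p_mul_q_pow_sub_q_pow_mul_p, add_mul, mul_assoc, ← pow_succ', smul_mul_assoc, add_comm]
    rw [SetLike.mem_coe, Submodule.mem_comap, LinearMap.mulLeft_apply, h]
    exact S.add_mem (q_pow_mul_p_pow_mem_span _ _) (S.smul_mem _ (q_pow_mul_p_pow_mem_span _ _))
  | add a b ha hb => intro s hs; rw [add_mul]; exact S.add_mem (ha s hs) (hb s hs)
  | mul a b ha hb => intro s hs; rw [mul_assoc]; exact ha _ (hb s hs)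

/-- Left multiplication written in normal-ordered symbols. -/
noncomputable def normalOrderedRep : Weyl →ₐ[ℂ] Module.End ℂ (MvPolynomial (Fin 2) ℂ) :=
  RingQuot.liftAlgHom ℂ ⟨FreeAlgebra.lift ℂ
    ![LinearMap.mulLeft ℂ (X 0), LinearMap.mulLeft ℂ (X 1) - Complex.I • (pderiv 0).toLinearMap],
    by
      rintro _ _ ⟨⟩
      refine LinearMap.ext fun f => ?_
      simp only [map_sub, map_mul, FreeAlgebra.lift_ι_apply, Matrix.cons_val_zero,
        Matrix.cons_val_one, Matrix.cons_val_fin_one, LinearMap.sub_apply, Module.End.mul_apply,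
        LinearMap.mulLeft_apply, LinearMap.smul_apply, Derivation.coeFn_coe, smul_eq_C_mul,
        Derivation.leibniz, smul_eq_mul, pderiv_X, Pi.single_eq_same, mul_one, smul_add, map_smul,
        map_one, Module.End.one_apply]
      ring⟩

theorem normalOrderedRep_q : normalOrderedRep q = LinearMap.mulLeft ℂ (X 0) := by
  simp [normalOrderedRep, q, RingQuot.liftAlgHom_mkAlgHom_apply]

theorem normalOrderedRep_p :
    normalOrderedRep p = LinearMap.mulLeft ℂ (X 1) - Complex.I • (pderiv 0).toLinearMap := by
  simp [normalOrderedRep, p, RingQuot.liftAlgHom_mkAlgHom_apply]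

theorem normalOrderedRep_normalMonomial_one (m : Fin 2 →₀ ℕ) :
    normalOrderedRep (normalMonomial m) 1 = monomial m 1 := by
  have hp (n : ℕ) : normalOrderedRep (p ^ n) 1 = X 1 ^ n := by
    induction n with
    | zero => simp
    | succ n ih =>
      rw [pow_succ', map_mul, Module.End.mul_apply, ih, normalOrderedRep_p]
      simp [pderiv_X_of_ne (show (1 : Fin 2) ≠ 0 by decide), pow_succ']
  rw [normalMonomial, map_mul, map_pow, Module.End.mul_apply, hp, normalOrderedRep_q,
    LinearMap.pow_mulLeft, LinearMap.mulLeft_apply, monomial_eq, C_1, one_mul,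
    Finsupp.prod_fintype _ _ (by simp), Fin.prod_univ_two]

theorem linearIndependent_normalMonomial : LinearIndependent ℂ normalMonomial := by
  apply LinearIndependent.of_comp ((LinearMap.applyₗ 1).comp normalOrderedRep.toLinearMap)
  have hcomp : ⇑((LinearMap.applyₗ 1).comp normalOrderedRep.toLinearMap) ∘ normalMonomial
      = ⇑(basisMonomials (Fin 2) ℂ) := by
    ext m : 1
    simp [normalOrderedRep_normalMonomial_one]
  rw [hcomp]
  exact (basisMonomials (Fin 2) ℂ).linearIndependent

noncomputable def normalBasis : Module.Basis (Fin 2 →₀ ℕ) ℂ Weyl :=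
  .mk linearIndependent_normalMonomial span_normalMonomial.ge

theorem normalBasis_apply (m : Fin 2 →₀ ℕ) : normalBasis m = normalMonomial m :=
  Module.Basis.mk_apply _ _ m

noncomputable def symbol : Weyl ≃ₗ[ℂ] MvPolynomial (Fin 2) ℂ :=
  normalBasis.equiv (basisMonomials (Fin 2) ℂ) (Equiv.refl _)

theorem symbol_normalMonomial (m : Fin 2 →₀ ℕ) : symbol (normalMonomial m) = monomial m 1 := by
  rw [← normalBasis_apply, symbol, Module.Basis.equiv_apply, coe_basisMonomials, Equiv.refl_apply]

noncomputable def derivQ : Weyl →ₗ[ℂ] Weyl :=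
  Complex.I • (LinearMap.mulLeft ℂ p - LinearMap.mulRight ℂ p)

noncomputable def derivP : Weyl →ₗ[ℂ] Weyl :=
  (-Complex.I) • (LinearMap.mulLeft ℂ q - LinearMap.mulRight ℂ q)

theorem derivQ_apply (W : Weyl) : derivQ W = Complex.I • (p * W - W * p) := rfl

theorem derivP_apply (W : Weyl) : derivP W = (-Complex.I) • (q * W - W * q) := rfl

theorem derivQ_normalMonomial (m : Fin 2 →₀ ℕ) :
    derivQ (normalMonomial m) = (m 0 : ℂ) • normalMonomial (m - Finsupp.single 0 1) := by
  have h : normalMonomial m * p = q ^ m 0 * p * p ^ m 1 := by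
    rw [normalMonomial, mul_assoc, mul_assoc, ← pow_succ, ← pow_succ']
  rw [derivQ_apply, h, normalMonomial, ← mul_assoc, ← sub_mul, p_mul_q_pow_sub_q_pow_mul_p,
    smul_mul_assoc, smul_smul]
  have hm : normalMonomial (m - Finsupp.single 0 1) = q ^ (m 0 - 1) * p ^ m 1 := by
    simp [normalMonomial]
  rw [hm, show Complex.I * (m 0 * -Complex.I) = m 0 by
    linear_combination (-(m 0 : ℂ)) * Complex.I_sq]

theorem derivP_normalMonomial (m : Fin 2 →₀ ℕ) :
    derivP (normalMonomial m) = (m 1 : ℂ) • normalMonomial (m - Finsupp.single 1 1) := by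
  have h : q * normalMonomial m = q ^ m 0 * q * p ^ m 1 := by
    rw [normalMonomial, ← mul_assoc, ← pow_succ, ← pow_succ']
  rw [derivP_apply, h, normalMonomial, mul_assoc, mul_assoc, ← mul_sub,
    q_mul_p_pow_sub_p_pow_mul_q, mul_smul_comm, smul_smul]
  have hm : normalMonomial (m - Finsupp.single 1 1) = q ^ m 0 * p ^ (m 1 - 1) := by
    simp [normalMonomial]
  rw [hm, show -Complex.I * (m 1 * Complex.I) = m 1 by
    linear_combination (-(m 1 : ℂ)) * Complex.I_sq]

theorem symbol_derivQ (W : Weyl) : symbol (derivQ W) = pderiv 0 (symbol W) := by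
  suffices h : symbol.toLinearMap ∘ₗ derivQ = (pderiv 0).toLinearMap ∘ₗ symbol.toLinearMap from
    congr($h W)
  refine normalBasis.ext fun m => ?_
  simp [normalBasis_apply, derivQ_normalMonomial, symbol_normalMonomial, pderiv_monomial,
    smul_monomial]

theorem symbol_derivP (W : Weyl) : symbol (derivP W) = pderiv 1 (symbol W) := by
  suffices h : symbol.toLinearMap ∘ₗ derivP = (pderiv 1).toLinearMap ∘ₗ symbol.toLinearMap from
    congr($h W)
  refine normalBasis.ext fun m => ?_
  simp [normalBasis_apply, derivP_normalMonomial, symbol_normalMonomial, pderiv_monomial,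
    smul_monomial]

theorem exists_eq_derivP_and_eq_neg_derivQ_iff (j₁ j₂ : Weyl) :
    (∃ J, j₁ = derivP J ∧ j₂ = -derivQ J) ↔ -derivQ j₁ = derivP j₂ := by
  rw [← symbol.injective.eq_iff, map_neg, symbol_derivQ, symbol_derivP, neg_eq_iff_eq_neg,
    ← map_neg, ← exists_eq_pderiv_and_eq_pderiv_iff (show (1 : Fin 2) ≠ 0 by decide)]
  refine symbol.toEquiv.exists_congr fun J => ?_
  simp only [← symbol.injective.eq_iff, map_neg, symbol_derivP, symbol_derivQ,
    LinearEquiv.coe_toEquiv, neg_eq_iff_eq_neg]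

end Weyl

/-- A pair `(j₁, j₂)` in the Weyl algebra is commutator-conservative, i.e. there is a
potential `J` with `j₁ = (1/i)[q,J] = -i • [q,J]` and `j₂ = (1/i)[p,J] = -i • [p,J]`,
if and only if the curl condition `-∂j₁/∂q = ∂j₂/∂p` holds, where
`∂X/∂q := (-1/i)[p,X] = i • [p,X]` and `∂X/∂p := (1/i)[q,X] = -i • [q,X]`. -/
theorem commutatorConservative_iff_curl (j₁ j₂ : Weyl) :
    (∃ J : Weyl, j₁ = (-Complex.I) • (Weyl.q * J - J * Weyl.q) ∧
        j₂ = (-Complex.I) • (Weyl.p * J - J * Weyl.p)) ↔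
    -(Complex.I • (Weyl.p * j₁ - j₁ * Weyl.p))
        = (-Complex.I) • (Weyl.q * j₂ - j₂ * Weyl.q) := by
  have hneg (J : Weyl) : (-Complex.I) • (Weyl.p * J - J * Weyl.p) = -Weyl.derivQ J :=
    neg_smul Complex.I (Weyl.p * J - J * Weyl.p)
  simp only [hneg]
  exact Weyl.exists_eq_derivP_and_eq_neg_derivQ_iff j₁ j₂
end

section
/- Preservation of commutation relations for physically realizable single-mode QSDEs: if H = H* and L are elements of the Weyl algebra with [q,p] = i·1, and one defines g₁ = [q,L], g₂ = [p,L], f_L = (1/2)((g* L) + (g* L)*) componentwise, f_C = -i[x,H], f = f_C + f_L, then the Itô drift of the commutator vanishes: [f₁,p] + [q,f₂] + (g₁* g₂ - g₂* g₁) = 0, and the noise coefficients vanish: [g₁,p] + [q,g₂] = 0 and [g₁*,p] + [q,g₂*] = 0. -/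
/-!
Since `[q, p] = i` is central, the Jacobi identity gives `[[q, x], p] + [q, [p, x]] = [[q, p], x] = 0`
for every `x`. Applied to `x = L` and `x = L*` this kills the noise coefficients, and applied to `x = H`
it kills the Hamiltonian part of the drift. Expanding the Lindblad part of the drift by the Leibniz rule
leaves the same Jacobi expressions in `L` and `L*`, multiplied by `L*` and `L`, plus the term
`g₂* g₁ - g₁* g₂`, which cancels against the Itô correction.
-/

attribute [local instance] LieRing.ofAssociativeRing LieAlgebra.ofAssociativeAlgebra

theorem lie_lie_add_lie_lie {L : Type*} [LieRing L] (q p x : L) :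
    ⁅⁅q, x⁆, p⁆ + ⁅q, ⁅p, x⁆⁆ = ⁅⁅q, p⁆, x⁆ := by
  rw [leibniz_lie q p x, ← lie_skew p]
  abel

section Ring

variable {A : Type*} [Ring A]

theorem lie_lie_add_lie_lie_eq_zero {q p x : A} (h : Commute ⁅q, p⁆ x) :
    ⁅⁅q, x⁆, p⁆ + ⁅q, ⁅p, x⁆⁆ = 0 :=
  (lie_lie_add_lie_lie q p x).trans h.lie_eq

theorem lie_lindblad_add_lie_lindblad {q p L M : A} (hL : Commute ⁅q, p⁆ L)
    (hM : Commute ⁅q, p⁆ M) :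
    ⁅⁅M, q⁆ * L + M * ⁅q, L⁆, p⁆ + ⁅q, ⁅M, p⁆ * L + M * ⁅p, L⁆⁆
      = 2 • (⁅M, p⁆ * ⁅q, L⁆ - ⁅M, q⁆ * ⁅p, L⁆) := by
  calc ⁅⁅M, q⁆ * L + M * ⁅q, L⁆, p⁆ + ⁅q, ⁅M, p⁆ * L + M * ⁅p, L⁆⁆
      = -(⁅⁅q, M⁆, p⁆ + ⁅q, ⁅p, M⁆⁆) * L + M * (⁅⁅q, L⁆, p⁆ + ⁅q, ⁅p, L⁆⁆)
          + 2 • (⁅M, p⁆ * ⁅q, L⁆ - ⁅M, q⁆ * ⁅p, L⁆) := by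
        simp only [Ring.lie_def]
        noncomm_ring
    _ = 2 • (⁅M, p⁆ * ⁅q, L⁆ - ⁅M, q⁆ * ⁅p, L⁆) := by
        rw [lie_lie_add_lie_lie_eq_zero hL, lie_lie_add_lie_lie_eq_zero hM]
        simp only [neg_zero, zero_mul, mul_zero, zero_add]

theorem star_lie [StarRing A] (a b : A) : star ⁅a, b⁆ = ⁅star b, star a⁆ := by
  simp only [Ring.lie_def, star_sub, star_mul]

end Ring

theorem physically_realizable_preserves_ccr_general {A : Type*} [Ring A] [Algebra ℂ A]
    [StarRing A] (q p : A) (hq : star q = q) (hp : star p = p)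
    (hqp : q * p - p * q = Complex.I • (1 : A))
    (H L : A)
    (g₁ g₂ f₁ f₂ : A)
    (hg₁ : g₁ = q * L - L * q) (hg₂ : g₂ = p * L - L * p)
    (hf₁ : f₁ = (-Complex.I) • (q * H - H * q)
      + (1 / 2 : ℂ) • (star g₁ * L + star (star g₁ * L)))
    (hf₂ : f₂ = (-Complex.I) • (p * H - H * p)
      + (1 / 2 : ℂ) • (star g₂ * L + star (star g₂ * L))) :
    (f₁ * p - p * f₁) + (q * f₂ - f₂ * q) + (star g₁ * g₂ - star g₂ * g₁) = 0 ∧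
    (g₁ * p - p * g₁) + (q * g₂ - g₂ * q) = 0 ∧
    (star g₁ * p - p * star g₁) + (q * star g₂ - star g₂ * q) = 0 := by
  simp only [← Ring.lie_def] at hqp hg₁ hg₂ hf₁ hf₂ ⊢
  have central (x : A) : Commute ⁅q, p⁆ x := by
    rw [hqp]
    exact (Commute.one_left x).smul_left _
  have hsg₁ : star g₁ = ⁅star L, q⁆ := by rw [hg₁, star_lie, hq]
  have hsg₂ : star g₂ = ⁅star L, p⁆ := by rw [hg₂, star_lie, hp]
  rw [star_mul, star_star, hsg₁] at hf₁
  rw [star_mul, star_star, hsg₂] at hf₂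
  subst hg₁ hg₂ hf₁ hf₂
  refine ⟨?_, lie_lie_add_lie_lie_eq_zero (central L), ?_⟩
  · rw [hsg₁, hsg₂]
    have hH := lie_lie_add_lie_lie_eq_zero (central H)
    have hLindblad := lie_lindblad_add_lie_lindblad (central L) (central (star L))
    simp only [add_lie, lie_add, smul_lie, lie_smul] at hLindblad ⊢
    linear_combination (norm := module) (-Complex.I) • hH + (1 / 2 : ℂ) • hLindblad
  · rw [hsg₁, hsg₂, ← lie_skew (star L) q, ← lie_skew (star L) p, neg_lie, lie_neg, ← neg_add,
      lie_lie_add_lie_lie_eq_zero (central (star L)), neg_zero]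

/-- Preservation of commutation relations for physically realizable single-mode QSDEs:
with `H = H*`, `L` in a *-algebra with self-adjoint `q`, `p`, `[q,p] = i • 1`, and
`g₁ = [q,L]`, `g₂ = [p,L]`, `f_{L,i} = (1/2)(gᵢ* L + (gᵢ* L)*)`,
`f_i = -i[x_i,H] + f_{L,i}`, the Itô drift of the commutator vanishes:
`[f₁,p] + [q,f₂] + (g₁* g₂ - g₂* g₁) = 0`, and the noise coefficients vanish:
`[g₁,p] + [q,g₂] = 0` and `[g₁*,p] + [q,g₂*] = 0`. -/
theorem physically_realizable_preserves_ccr {A : Type*} [Ring A] [Algebra ℂ A]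
    [StarRing A] [StarModule ℂ A] (q p : A) (hq : star q = q) (hp : star p = p)
    (hqp : q * p - p * q = Complex.I • (1 : A))
    (H L : A) (hH : star H = H)
    (g₁ g₂ f₁ f₂ : A)
    (hg₁ : g₁ = q * L - L * q) (hg₂ : g₂ = p * L - L * p)
    (hf₁ : f₁ = (-Complex.I) • (q * H - H * q)
      + (1 / 2 : ℂ) • (star g₁ * L + star (star g₁ * L)))
    (hf₂ : f₂ = (-Complex.I) • (p * H - H * p)
      + (1 / 2 : ℂ) • (star g₂ * L + star (star g₂ * L))) :
    (f₁ * p - p * f₁) + (q * f₂ - f₂ * q) + (star g₁ * g₂ - star g₂ * g₁) = 0 ∧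
    (g₁ * p - p * g₁) + (q * g₂ - g₂ * q) = 0 ∧
    (star g₁ * p - p * star g₁) + (q * star g₂ - star g₂ * q) = 0 :=
  physically_realizable_preserves_ccr_general q p hq hp hqp H L g₁ g₂ f₁ f₂ hg₁ hg₂ hf₁ hf₂
end

section
/- Shifting the coupling constant preserves physical realizability of the drift correction: let g = (g₁,g₂) be commutator-conservative with g = -i[x, iL] for L = -i(Z + C), C ∈ ℂ, and define f_L = (1/2)(g* L + (g* L)*) componentwise. If f - f_L is commutator-conservative, then for any other constant C₁ ∈ ℂ, with L₁ = -i(Z + C₁) and f_{L,1} = (1/2)(g* L₁ + (g* L₁)*), the difference f - f_{L,1} is also commutator-conservative. -/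
/-!
The drift corrections for two coupling constants differ by a term linear in `g` and `g*`:
shifting `L` by `c • 1` shifts `f_L` by `(1/2)(c g* + c̄ g)`. Commutator-conservative pairs form
the range of the linear map `J ↦ -i([q,J],[p,J])`, hence a subspace, and it is closed under `star`
because `q` and `p` are self-adjoint. So the shift is commutator-conservative and can be absorbed.
-/

open Complex

section Conservative

variable {A : Type*} [Ring A] [Algebra ℂ A]

def gradAlong (x : A) : A →ₗ[ℂ] A :=
  (-I) • (LinearMap.mulLeft ℂ x - LinearMap.mulRight ℂ x)

theorem gradAlong_apply (x J : A) : gradAlong x J = (-I) • (x * J - J * x) := rfl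

def conservativePairs (q p : A) : Submodule ℂ (A × A) :=
  LinearMap.range ((gradAlong q).prod (gradAlong p))

theorem mem_conservativePairs {q p f₁ f₂ : A} :
    (f₁, f₂) ∈ conservativePairs q p ↔
      ∃ J : A, f₁ = (-I) • (q * J - J * q) ∧ f₂ = (-I) • (p * J - J * p) := by
  constructor
  · rintro ⟨J, hJ⟩
    exact ⟨J, (congrArg Prod.fst hJ).symm, (congrArg Prod.snd hJ).symm⟩
  · rintro ⟨J, h₁, h₂⟩
    exact ⟨J, by rw [h₁, h₂]; rfl⟩

variable [StarRing A] [StarModule ℂ A]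

theorem star_gradAlong {x : A} (hx : star x = x) (J : A) :
    star (gradAlong x J) = gradAlong x (star J) := by
  simp only [gradAlong_apply, star_smul, star_sub, star_mul, hx, star_def, map_neg, conj_I]
  module

theorem star_mem_conservativePairs {q p g₁ g₂ : A} (hq : star q = q) (hp : star p = p)
    (hg : (g₁, g₂) ∈ conservativePairs q p) :
    (star g₁, star g₂) ∈ conservativePairs q p := by
  obtain ⟨J, h₁, h₂⟩ := mem_conservativePairs.1 hg
  refine mem_conservativePairs.2 ⟨star J, ?_, ?_⟩
  · rw [h₁, ← gradAlong_apply, star_gradAlong hq, gradAlong_apply]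
  · rw [h₂, ← gradAlong_apply, star_gradAlong hp, gradAlong_apply]

noncomputable def driftCorrection (g L : A) : A :=
  (1 / 2 : ℂ) • (star g * L + star (star g * L))

theorem driftCorrection_add_smul_one (g L : A) (c : ℂ) :
    driftCorrection g (L + c • 1) =
      driftCorrection g L + (1 / 2 : ℂ) • (c • star g + (starRingEnd ℂ c) • g) := by
  simp only [driftCorrection, mul_add, star_add, mul_smul_comm, mul_one, star_smul, star_star,
    star_def]
  module

theorem sub_driftCorrection_add_smul_one_mem {q p g₁ g₂ f₁ f₂ : A} (hq : star q = q)
    (hp : star p = p) (hg : (g₁, g₂) ∈ conservativePairs q p) {L : A}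
    (hf : (f₁ - driftCorrection g₁ L, f₂ - driftCorrection g₂ L) ∈ conservativePairs q p)
    (c : ℂ) :
    (f₁ - driftCorrection g₁ (L + c • 1), f₂ - driftCorrection g₂ (L + c • 1)) ∈
      conservativePairs q p := by
  set S := conservativePairs q p
  have hshift : (1 / 2 : ℂ) • (c • (star g₁, star g₂) + (starRingEnd ℂ c) • (g₁, g₂)) ∈ S :=
    S.smul_mem _ (S.add_mem (S.smul_mem _ (star_mem_conservativePairs hq hp hg)) (S.smul_mem _ hg))
  convert S.sub_mem hf hshift using 1
  simp only [driftCorrection_add_smul_one, Prod.mk_sub_mk, Prod.smul_mk, Prod.mk_add_mk,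
    sub_add_eq_sub_sub]

end Conservative

theorem coupling_constant_shift_general {A : Type*} [Ring A] [Algebra ℂ A] [StarRing A]
    [StarModule ℂ A] (q p : A) (hq : star q = q) (hp : star p = p)
    (g₁ g₂ : A)
    (hg : ∃ J : A, g₁ = (-Complex.I) • (q * J - J * q) ∧
      g₂ = (-Complex.I) • (p * J - J * p))
    (Z : A) (C C₁ : ℂ) (f₁ f₂ : A)
    (hfL : ∃ J : A,
      f₁ - (1 / 2 : ℂ) • (star g₁ * ((-Complex.I) • (Z + C • 1))
          + star (star g₁ * ((-Complex.I) • (Z + C • 1))))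
        = (-Complex.I) • (q * J - J * q) ∧
      f₂ - (1 / 2 : ℂ) • (star g₂ * ((-Complex.I) • (Z + C • 1))
          + star (star g₂ * ((-Complex.I) • (Z + C • 1))))
        = (-Complex.I) • (p * J - J * p)) :
    ∃ J : A,
      f₁ - (1 / 2 : ℂ) • (star g₁ * ((-Complex.I) • (Z + C₁ • 1))
          + star (star g₁ * ((-Complex.I) • (Z + C₁ • 1))))
        = (-Complex.I) • (q * J - J * q) ∧
      f₂ - (1 / 2 : ℂ) • (star g₂ * ((-Complex.I) • (Z + C₁ • 1))
          + star (star g₂ * ((-Complex.I) • (Z + C₁ • 1))))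
        = (-Complex.I) • (p * J - J * p) := by
  have hL₁ : (-I) • (Z + C₁ • (1 : A)) = (-I) • (Z + C • 1) + (-I * (C₁ - C)) • 1 := by
    module
  rw [hL₁]
  exact mem_conservativePairs.1 <| sub_driftCorrection_add_smul_one_mem hq hp
    (mem_conservativePairs.2 hg) (mem_conservativePairs.2 hfL) _

/-- Shifting the coupling constant preserves physical realizability of the drift
correction: let `(g₁,g₂)` be commutator-conservative, `Z ∈ A`, `C, C₁ ∈ ℂ`,
`L = -i(Z + C)`, `L₁ = -i(Z + C₁)`, and `f_{L,i} = (1/2)(gᵢ* L + (gᵢ* L)*)`,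
`f_{L₁,i} = (1/2)(gᵢ* L₁ + (gᵢ* L₁)*)`. If `(f₁ - f_{L,1}, f₂ - f_{L,2})` is
commutator-conservative, so is `(f₁ - f_{L₁,1}, f₂ - f_{L₁,2})`. -/
theorem coupling_constant_shift {A : Type*} [Ring A] [Algebra ℂ A] [StarRing A]
    [StarModule ℂ A] (q p : A) (hq : star q = q) (hp : star p = p)
    (hqp : q * p - p * q = Complex.I • (1 : A))
    (g₁ g₂ : A)
    (hg : ∃ J : A, g₁ = (-Complex.I) • (q * J - J * q) ∧
      g₂ = (-Complex.I) • (p * J - J * p))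
    (Z : A) (C C₁ : ℂ) (f₁ f₂ : A)
    (hfL : ∃ J : A,
      f₁ - (1 / 2 : ℂ) • (star g₁ * ((-Complex.I) • (Z + C • 1))
          + star (star g₁ * ((-Complex.I) • (Z + C • 1))))
        = (-Complex.I) • (q * J - J * q) ∧
      f₂ - (1 / 2 : ℂ) • (star g₂ * ((-Complex.I) • (Z + C • 1))
          + star (star g₂ * ((-Complex.I) • (Z + C • 1))))
        = (-Complex.I) • (p * J - J * p)) :
    ∃ J : A,
      f₁ - (1 / 2 : ℂ) • (star g₁ * ((-Complex.I) • (Z + C₁ • 1))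
          + star (star g₁ * ((-Complex.I) • (Z + C₁ • 1))))
        = (-Complex.I) • (q * J - J * q) ∧
      f₂ - (1 / 2 : ℂ) • (star g₂ * ((-Complex.I) • (Z + C₁ • 1))
          + star (star g₂ * ((-Complex.I) • (Z + C₁ • 1))))
        = (-Complex.I) • (p * J - J * p) :=
  coupling_constant_shift_general q p hq hp g₁ g₂ hg Z C C₁ f₁ f₂ hfL
end
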